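/- Let α : ℕ → ℝ be positive with ∑_k α(k) = ∞ and ∑_k α(k)² < ∞, let L > 0, and let {b(k)} be a nonnegative sequence with ∑_k α(k) b(k) < ∞. Suppose {V(k)} is a nonnegative sequence and {g(k)} a nonnegative sequence satisfying V(k+1) ≤ V(k) + α(k)² L − 2 α(k) g(k) + α(k) b(k) for all k. Then lim inf_{k→∞} g(k) = 0. -/
import Mathlib


open Filter

theorem stmt_18 (α b V g : ℕ → ℝ) (L : ℝ) (hL : 0 < L)
    (hαpos : ∀ k, 0 < α k)
    (hαdiv : Tendsto (fun n : ℕ => ∑ k ∈ Finset.range n, α k) atTop atTop)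
    (hαsq : Summable (fun k => (α k) ^ 2))
    (hbnonneg : ∀ k, 0 ≤ b k)
    (hab : Summable (fun k => α k * b k))
    (hVnonneg : ∀ k, 0 ≤ V k) (hgnonneg : ∀ k, 0 ≤ g k)
    (hrec : ∀ k, V (k + 1) ≤ V k + (α k) ^ 2 * L - 2 * α k * g k + α k * b k) :
    Filter.liminf g atTop = 0 := by
  have hfreq : ∀ ε : ℝ, 0 < ε → ∃ᶠ k in atTop, g k < ε := by
    intro ε hε
    by_contra h
    rw [not_frequently] at h
    simp only [not_lt, eventually_atTop] at h
    obtain ⟨N, hN⟩ := h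
    -- telescoping bound
    have key : ∀ n, V (N + n) + 2 * ε * ∑ i ∈ Finset.Ico N (N + n), α i ≤
        V N + L * ∑ i ∈ Finset.Ico N (N + n), (α i) ^ 2
          + ∑ i ∈ Finset.Ico N (N + n), α i * b i := by
      intro n
      induction n with
      | zero => simp
      | succ n ih =>
        have h1 := hrec (N + n)
        have h2 : ε ≤ g (N + n) := hN _ (Nat.le_add_right _ _)
        have hα := (hαpos (N + n)).le
        have hEq : N + (n + 1) = (N + n) + 1 := by omega
        rw [hEq, Finset.sum_Ico_succ_top (Nat.le_add_right _ _),
          Finset.sum_Ico_succ_top (Nat.le_add_right _ _),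
          Finset.sum_Ico_succ_top (Nat.le_add_right _ _)]
        nlinarith [hVnonneg (N + n)]
    -- RHS is bounded by a constant
    set C : ℝ := V N + L * (∑' i, (α i) ^ 2) + (∑' i, α i * b i) with hC
    have hbound : ∀ n, 2 * ε * ∑ i ∈ Finset.Ico N (N + n), α i ≤ C := by
      intro n
      have h1 : ∑ i ∈ Finset.Ico N (N + n), (α i) ^ 2 ≤ ∑' i, (α i) ^ 2 :=
        Summable.sum_le_tsum _ (fun i _ => sq_nonneg _) hαsq
      have h2 : ∑ i ∈ Finset.Ico N (N + n), α i * b i ≤ ∑' i, α i * b i :=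
        Summable.sum_le_tsum _ (fun i _ => mul_nonneg (hαpos i).le (hbnonneg i)) hab
      have := key n
      have hV := hVnonneg (N + n)
      nlinarith
    -- but the partial sums of α over Ico N _ tend to infinity
    have hdiv2 : Tendsto (fun n : ℕ => ∑ i ∈ Finset.Ico N (N + n), α i) atTop atTop := by
      have : ∀ n, ∑ i ∈ Finset.Ico N (N + n), α i
          = (∑ i ∈ Finset.range (N + n), α i) - ∑ i ∈ Finset.range N, α i := by
        intro n
        rw [Finset.sum_Ico_eq_sub _ (Nat.le_add_right _ _)]
      simp only [this, sub_eq_add_neg]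
      have hcomp : Tendsto (fun n : ℕ => ∑ i ∈ Finset.range (N + n), α i) atTop atTop :=
        hαdiv.comp (tendsto_atTop_mono (fun n => Nat.le_add_left n N) tendsto_id)
      exact tendsto_atTop_add_const_right atTop _ hcomp
    have : Tendsto (fun n : ℕ => 2 * ε * ∑ i ∈ Finset.Ico N (N + n), α i) atTop atTop :=
      hdiv2.const_mul_atTop (by linarith)
    obtain ⟨n, hn⟩ := (this.eventually_gt_atTop C).exists
    exact absurd (hbound n) (not_le.mpr hn)
  rw [liminf_eq]
  have hsub : {a : ℝ | ∀ᶠ n in atTop, a ≤ g n} ⊆ Set.Iic 0 := by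
    intro a ha
    by_contra h
    simp only [Set.mem_Iic, not_le] at h
    obtain ⟨k, hk1, hk2⟩ := (ha.and_frequently (hfreq a h)).exists
    linarith
  have h0 : (0 : ℝ) ∈ {a : ℝ | ∀ᶠ n in atTop, a ≤ g n} :=
    Eventually.of_forall hgnonneg
  exact le_antisymm (csSup_le ⟨0, h0⟩ fun a ha => hsub ha)
    (le_csSup ⟨0, fun a ha => hsub ha⟩ h0)
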